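/- Let m : (0, r₀] → (0, ∞) be differentiable and N : (0, r₀] → [0, ∞) be given, satisfying for all t ∈ (0, r₀]: m'(t)/m(t) ≤ (4N(r) + cr)/t + c whenever t ∈ [s, r] ⊆ (0, r₀], with c > 0 a constant and cr₀ ≤ log 2. Then for all 0 < s ≤ r ≤ r₀: m(r) ≤ 2 (r/s)^{4N(r)+cr} m(s). Similarly, if m'(t)/m(t) ≥ (N(s) − cr)/t − c on [s,r], then m(r) ≥ (1/2)(r/s)^{N(s)−cr} m(s). -/

import Mathlib

/-!
Integrating the bound on the logarithmic derivative of `m` over `[s, r]` gives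
`log m(r) - log m(s) ≤ A log (r / s) + c (r - s)`, by comparing `log m` with `A log t + c t`.
Since `c (r - s) ≤ c r₀ ≤ log 2`, exponentiating turns the error term into the factor `2`.
The lower bound is the same argument applied to `-log m`.
-/

open Real Set

theorem sub_le_mul_log_div_add_mul_sub_of_deriv_le {f f' : ℝ → ℝ} {s r A B : ℝ}
    (hs : 0 < s) (hsr : s ≤ r) (hf : ∀ t ∈ Icc s r, HasDerivAt f (f' t) t)
    (hf' : ∀ t ∈ Icc s r, f' t ≤ A / t + B) :
    f r - f s ≤ A * log (r / s) + B * (r - s) := by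
  have hgap : ∀ t ∈ Icc s r,
      HasDerivAt (fun t ↦ A * log t + B * t - f t) (A / t + B - f' t) t := fun t ht ↦ by
    rw [div_eq_mul_inv]
    exact (((hasDerivAt_log (hs.trans_le ht.1).ne').const_mul A).add
      ((hasDerivAt_id' t).const_mul B |>.congr_deriv (mul_one B))).sub (hf t ht)
  have hmono : MonotoneOn (fun t ↦ A * log t + B * t - f t) (Icc s r) :=
    monotoneOn_of_hasDerivWithinAt_nonneg (f' := fun t ↦ A / t + B - f' t) (convex_Icc s r)
      (fun t ht ↦ (hgap t ht).continuousAt.continuousWithinAt)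
      (fun t ht ↦ (hgap t (interior_subset ht)).hasDerivWithinAt)
      (fun t ht ↦ sub_nonneg.2 (hf' t (interior_subset ht)))
  have := hmono (left_mem_Icc.2 hsr) (right_mem_Icc.2 hsr) hsr
  rw [log_div (hs.trans_le hsr).ne' hs.ne']
  linarith

theorem mul_log_div_sub_mul_sub_le_sub_of_le_deriv {f f' : ℝ → ℝ} {s r A B : ℝ}
    (hs : 0 < s) (hsr : s ≤ r) (hf : ∀ t ∈ Icc s r, HasDerivAt f (f' t) t)
    (hf' : ∀ t ∈ Icc s r, A / t - B ≤ f' t) :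
    A * log (r / s) - B * (r - s) ≤ f r - f s := by
  have := sub_le_mul_log_div_add_mul_sub_of_deriv_le (f := -f) (f' := -f') (A := -A) (B := B)
    hs hsr (fun t ht ↦ (hf t ht).neg) fun t ht ↦ by
      have := hf' t ht
      simp only [Pi.neg_apply, neg_div]
      linarith
  simp only [Pi.neg_apply] at this
  linarith

theorem le_mul_rpow_mul_of_log_sub_le {x y a b A : ℝ} (hx : 0 < x) (hy : 0 < y) (ha : 0 < a)
    (hb : 0 < b) (h : log x - log y ≤ A * log a + log b) : x ≤ b * a ^ A * y := by
  rw [← log_le_log_iff hx (by positivity), log_mul (by positivity) hy.ne',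
    log_mul hb.ne' (by positivity), log_rpow ha]
  linarith

theorem inv_mul_rpow_mul_le_of_le_log_sub {x y a b A : ℝ} (hx : 0 < x) (hy : 0 < y) (ha : 0 < a)
    (hb : 0 < b) (h : A * log a - log b ≤ log x - log y) : b⁻¹ * a ^ A * y ≤ x := by
  rw [← log_le_log_iff (by positivity) hx, log_mul (by positivity) hy.ne',
    log_mul (by positivity) (by positivity), log_rpow ha, log_inv]
  linarith

theorem mass_doubling_estimate_general
    (c r₀ : ℝ) (hc : 0 < c) (hsmall : c * r₀ ≤ Real.log 2)
    (m m' N : ℝ → ℝ)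
    (hm : ∀ t ∈ Set.Ioc (0 : ℝ) r₀, 0 < m t)
    (hd : ∀ t ∈ Set.Ioc (0 : ℝ) r₀, HasDerivAt m (m' t) t) :
    ∀ s r : ℝ, 0 < s → s ≤ r → r ≤ r₀ →
      ((∀ t ∈ Set.Icc s r, m' t / m t ≤ (4 * N r + c * r) / t + c) →
        m r ≤ 2 * (r / s) ^ (4 * N r + c * r) * m s) ∧
      ((∀ t ∈ Set.Icc s r, (N s - c * r) / t - c ≤ m' t / m t) →
        (1 / 2) * (r / s) ^ (N s - c * r) * m s ≤ m r) := by
  intro s r hs hsr hr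
  have hsub : Icc s r ⊆ Ioc 0 r₀ := fun t ht ↦ ⟨hs.trans_le ht.1, ht.2.trans hr⟩
  have hlogm : ∀ t ∈ Icc s r, HasDerivAt (fun t ↦ log (m t)) (m' t / m t) t :=
    fun t ht ↦ (hd t (hsub ht)).log (hm t (hsub ht)).ne'
  have hms := hm s (hsub (left_mem_Icc.2 hsr))
  have hmr := hm r (hsub (right_mem_Icc.2 hsr))
  have hrs : 0 < r / s := div_pos (hs.trans_le hsr) hs
  have herror : c * (r - s) ≤ log 2 :=
    (mul_le_mul_of_nonneg_left (by linarith) hc.le).trans hsmall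
  refine ⟨fun hupper ↦ ?_, fun hlower ↦ ?_⟩
  · have := sub_le_mul_log_div_add_mul_sub_of_deriv_le hs hsr hlogm hupper
    exact le_mul_rpow_mul_of_log_sub_le hmr hms hrs two_pos (by linarith)
  · have := mul_log_div_sub_mul_sub_le_sub_of_le_deriv hs hsr hlogm hlower
    rw [one_div]
    exact inv_mul_rpow_mul_le_of_le_log_sub hmr hms hrs two_pos (by linarith)

theorem mass_doubling_estimate
    (c r₀ : ℝ) (hc : 0 < c) (hr₀ : 0 < r₀) (hsmall : c * r₀ ≤ Real.log 2)
    (m m' N : ℝ → ℝ)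
    (hm : ∀ t ∈ Set.Ioc (0 : ℝ) r₀, 0 < m t)
    (hN : ∀ t ∈ Set.Ioc (0 : ℝ) r₀, 0 ≤ N t)
    (hd : ∀ t ∈ Set.Ioc (0 : ℝ) r₀, HasDerivAt m (m' t) t) :
    ∀ s r : ℝ, 0 < s → s ≤ r → r ≤ r₀ →
      ((∀ t ∈ Set.Icc s r, m' t / m t ≤ (4 * N r + c * r) / t + c) →
        m r ≤ 2 * (r / s) ^ (4 * N r + c * r) * m s) ∧
      ((∀ t ∈ Set.Icc s r, (N s - c * r) / t - c ≤ m' t / m t) →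
        (1 / 2) * (r / s) ^ (N s - c * r) * m s ≤ m r) :=
  mass_doubling_estimate_general c r₀ hc hsmall m m' N hm hd
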